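/- Let 𝒲 = span{t^i D^j I, C : i∈ℤ, j∈ℤ≥0} be the subalgebra of 𝒟̂^N consisting of scalar-matrix differential operators together with the center (a copy of the central extension 𝒟̂^1 of the Lie algebra of differential operators on the circle). Then [𝒲, 𝒟̂^N] = 𝒟̂^N ⊖ ℂC, i.e. the span of all brackets [w, x] with w ∈ 𝒲 and x ∈ 𝒟̂^N contains every element t^i D^j A (i∈ℤ, j∈ℤ≥0, A∈gl_N); consequently, any 𝒟̂^N-module on which 𝒲 acts trivially is a trivial 𝒟̂^N-module. -/

import Mathlib

noncomputable section

open scoped BigOperators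
set_option maxHeartbeats 1000000

/-- Falling factorial `[b]_s = b(b-1)⋯(b-s+1)` of an integer `b`. -/
def dfall (b : ℤ) (s : ℕ) : ℤ := ∏ i ∈ Finset.range s, (b - (i : ℤ))

/-- Generalized binomial coefficient `binom(a, n)` as a complex number, for `a : ℤ`, `n : ℕ`. -/
def cbinom (a : ℤ) (n : ℕ) : ℂ :=
  (∏ i ∈ Finset.range n, ((a : ℂ) - (i : ℂ))) / (n.factorial : ℂ)

/-- The coefficient `δ_{i,-k} (-1)^j j! l! binom(i+j, j+l+1)` of the central element in the
bracket of `t^a (d/dt)^j A = t^i [D]_j A` (with `a = i + j`) and `t^b (d/dt)^l B = t^k [D]_l B`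
(with `b = k + l`); it is still to be multiplied by `tr (AB)`. -/
def cocycleCoeff (a : ℤ) (j : ℕ) (b : ℤ) (l : ℕ) : ℂ :=
  if a + b = (j : ℤ) + (l : ℤ) then
    (-1 : ℂ) ^ j * (j.factorial : ℂ) * (l.factorial : ℂ) * cbinom a (j + l + 1)
  else 0

/-- A module over the universal central extension `𝒟̂^N` of the Lie algebra of `N × N`-matrix
differential operators on the circle, presented through the action `ρ a j A` of the basis
elements `t^a (d/dt)^j A = t^{a-j} [D]_j A` (`a ∈ ℤ`, `j ∈ ℕ`, `A ∈ gl_N(ℂ)`) together with the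
action `cC` of the central element `C`, subject to bilinearity in `A` and the commutation
relations (2.3)/(3.12) of the paper. -/
structure DhatModule (N : ℕ) (V : Type*) [AddCommGroup V] [Module ℂ V] where
  ρ : ℤ → ℕ → Matrix (Fin N) (Fin N) ℂ → Module.End ℂ V
  cC : Module.End ℂ V
  ρ_add : ∀ a j A B, ρ a j (A + B) = ρ a j A + ρ a j B
  ρ_smul : ∀ a j (c : ℂ) A, ρ a j (c • A) = c • ρ a j A
  cC_comm : ∀ a j A, cC * ρ a j A = ρ a j A * cC
  bracket_rel : ∀ (a : ℤ) (j : ℕ) (A : Matrix (Fin N) (Fin N) ℂ) (b : ℤ) (l : ℕ)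
      (B : Matrix (Fin N) (Fin N) ℂ),
    ρ a j A * ρ b l B - ρ b l B * ρ a j A =
      ((∑ s ∈ Finset.range (j + 1),
        ((j.choose s : ℂ) * (dfall b s : ℂ)) • ρ (a + b - (s : ℤ)) (j + l - s) (A * B))
      - (∑ s ∈ Finset.range (l + 1),
        ((l.choose s : ℂ) * (dfall a s : ℂ)) • ρ (a + b - (s : ℤ)) (j + l - s) (B * A)))
      + (cocycleCoeff a j b l * (A * B).trace) • cC

namespace DhatModule

variable {N : ℕ} {V : Type*} [AddCommGroup V] [Module ℂ V]

/-- A subspace invariant under the `𝒟̂^N`-action. -/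
def IsSub (M : DhatModule N V) (U : Submodule ℂ V) : Prop :=
  (∀ a j A, ∀ v ∈ U, M.ρ a j A v ∈ U) ∧ ∀ v ∈ U, M.cC v ∈ U

/-- The module is trivial: `𝒟̂^N` acts by zero. -/
def IsTrivial (M : DhatModule N V) : Prop :=
  (∀ a j A (v : V), M.ρ a j A v = 0) ∧ ∀ v : V, M.cC v = 0

/-- Irreducibility: the module is nonzero and has no invariant subspace besides `⊥` and `⊤`. -/
def IsIrreducible (M : DhatModule N V) : Prop :=
  (⊥ : Submodule ℂ V) ≠ ⊤ ∧ ∀ U : Submodule ℂ V, M.IsSub U → U = ⊥ ∨ U = ⊤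

/-- Indecomposability: the module is nonzero and is not the direct sum of two nonzero
invariant subspaces. -/
def IsIndecomposable (M : DhatModule N V) : Prop :=
  (⊥ : Submodule ℂ V) ≠ ⊤ ∧ ∀ U W : Submodule ℂ V, M.IsSub U → M.IsSub W →
    U ⊓ W = ⊥ → U ⊔ W = ⊤ → U = ⊥ ∨ W = ⊥

end DhatModule

/-- The underlying space `ℂ^N[t,t⁻¹]`; the coefficient of `t^k` is stored at index `k`. -/
abbrev MN (N : ℕ) : Type := ℤ →₀ (Fin N → ℂ)

/-- The operator `t^i D^j A` on `ℂ^N[t,t⁻¹]` (where `D = t d/dt`):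
`t^i D^j A ⬝ (t^k v) = k^j t^{i+k} (A v)`.  This realizes `𝒟^N` faithfully as operators. -/
def gen (N : ℕ) (i : ℤ) (j : ℕ) (A : Matrix (Fin N) (Fin N) ℂ) : Module.End ℂ (MN N) :=
  Finsupp.lsum ℂ fun k : ℤ => (Finsupp.lsingle (k + i)) ∘ₗ (((k : ℂ) ^ j) • A.mulVecLin)

lemma gen_single (N : ℕ) (i : ℤ) (j : ℕ) (A : Matrix (Fin N) (Fin N) ℂ) (k : ℤ) (v : Fin N → ℂ) :
    gen N i j A (Finsupp.single k v) = Finsupp.single (k + i) (((k:ℂ)^j) • A.mulVec v) := by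
  simp only [gen, Finsupp.lsum_single, LinearMap.comp_apply, LinearMap.smul_apply,
    Finsupp.lsingle_apply, Matrix.mulVecLin_apply]

lemma bracket1 (N : ℕ) (i : ℤ) (j : ℕ) (A : Matrix (Fin N) (Fin N) ℂ) :
    gen N 0 1 1 * gen N i j A - gen N i j A * gen N 0 1 1 = (i : ℂ) • gen N i j A := by
  apply Finsupp.lhom_ext
  intro k v
  simp only [LinearMap.sub_apply, Module.End.mul_apply, gen_single, LinearMap.smul_apply,
    Matrix.mulVec_smul, Matrix.one_mulVec, Finsupp.smul_single, add_zero, pow_one]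
  rw [← Finsupp.single_sub]
  congr 1
  rw [smul_smul, smul_smul, smul_smul, ← sub_smul]
  congr 1
  push_cast
  ring

lemma bracket2 (N : ℕ) (j : ℕ) (A : Matrix (Fin N) (Fin N) ℂ) :
    gen N 1 (j+1) 1 * gen N (-1) 0 A - gen N (-1) 0 A * gen N 1 (j+1) 1 =
      ∑ s ∈ Finset.range (j+1),
        (((-1 : ℂ)^(j+1-s) * ((j+1).choose s : ℂ)) • gen N 0 s A) := by
  apply Finsupp.lhom_ext
  intro k v
  have key : ((k : ℂ) - 1)^(j+1) - (k:ℂ)^(j+1)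
      = ∑ s ∈ Finset.range (j+1), (-1 : ℂ)^(j+1-s) * ((j+1).choose s : ℂ) * (k:ℂ)^s := by
    have h := add_pow (k : ℂ) (-1 : ℂ) (j+1)
    rw [Finset.sum_range_succ] at h
    simp only [Nat.sub_self, pow_zero, Nat.choose_self, Nat.cast_one, mul_one] at h
    have h2 : ((k:ℂ) - 1)^(j+1) = (k:ℂ)^(j+1) + ∑ x ∈ Finset.range (j+1),
        (k:ℂ)^x * (-1:ℂ)^(j+1-x) * ((j+1).choose x : ℂ) := by
      rw [sub_eq_add_neg, h]; ring
    rw [h2, add_sub_cancel_left]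
    apply Finset.sum_congr rfl
    intro s _
    ring
  simp only [LinearMap.sub_apply, Module.End.mul_apply, gen_single, LinearMap.smul_apply,
    Matrix.mulVec_smul, Matrix.one_mulVec, Finsupp.smul_single, pow_zero, one_smul,
    Finset.sum_apply, LinearMap.coe_sum, smul_smul, add_zero]
  have e1 : k + -1 + 1 = k := by ring
  have e2 : k + 1 + -1 = k := by ring
  rw [e1, e2, ← Finsupp.single_sub, ← Finsupp.single_finset_sum]
  congr 1
  rw [← sub_smul, ← Finset.sum_smul]
  congr 1
  have e3 : ((k + -1 : ℤ) : ℂ) = (k:ℂ) - 1 := by push_cast; ring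
  rw [e3, one_mul, key]

/-- Let `𝒲 = span{t^i D^j I, C}` be the subalgebra of `𝒟̂^N` of scalar-matrix differential
operators together with the center (a copy of `𝒟̂^1`).  Then `[𝒲, 𝒟̂^N]` contains every
element `t^i D^j A`; consequently, any `𝒟̂^N`-module on which `𝒲` acts trivially is a
trivial `𝒟̂^N`-module. -/
theorem scalar_subalgebra_brackets_span (N : ℕ) (hN : 1 ≤ N) :
    (∀ (i : ℤ) (j : ℕ) (A : Matrix (Fin N) (Fin N) ℂ),
      gen N i j A ∈ Submodule.span ℂ
        {z : Module.End ℂ (MN N) | ∃ (i' : ℤ) (j' : ℕ) (x : Module.End ℂ (MN N)),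
          x ∈ Submodule.span ℂ
            {y : Module.End ℂ (MN N) |
              ∃ (i₀ : ℤ) (j₀ : ℕ) (A₀ : Matrix (Fin N) (Fin N) ℂ), y = gen N i₀ j₀ A₀} ∧
          z = gen N i' j' 1 * x - x * gen N i' j' 1}) ∧
    (∀ (V : Type) [AddCommGroup V] [Module ℂ V] (M : DhatModule N V),
      (∀ (a : ℤ) (j : ℕ), M.ρ a j 1 = 0) → M.cC = 0 → M.IsTrivial) := by
  constructor
  · intro i j A
    set T : Set (Module.End ℂ (MN N)) :=
      {y : Module.End ℂ (MN N) |
        ∃ (i₀ : ℤ) (j₀ : ℕ) (A₀ : Matrix (Fin N) (Fin N) ℂ), y = gen N i₀ j₀ A₀} with hT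
    set S : Set (Module.End ℂ (MN N)) :=
      {z : Module.End ℂ (MN N) | ∃ (i' : ℤ) (j' : ℕ) (x : Module.End ℂ (MN N)),
        x ∈ Submodule.span ℂ T ∧ z = gen N i' j' 1 * x - x * gen N i' j' 1} with hS
    by_cases hi : i = 0
    · subst hi
      clear hN
      induction j using Nat.strong_induction_on with
      | _ j ih =>
        have hx : gen N (-1) 0 A ∈ Submodule.span ℂ T :=
          Submodule.subset_span ⟨-1, 0, A, rfl⟩
        have hz : gen N 1 (j+1) 1 * gen N (-1) 0 A - gen N (-1) 0 A * gen N 1 (j+1) 1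
            ∈ Submodule.span ℂ S :=
          Submodule.subset_span ⟨1, j+1, _, hx, rfl⟩
        have hcj : ((-1:ℂ)^(j+1-j) * (((j+1).choose j : ℕ) : ℂ)) = -((j:ℂ)+1) := by
          have : j + 1 - j = 1 := by omega
          rw [this, Nat.choose_succ_self_right]
          push_cast
          ring
        have hne : (-((j:ℂ)+1)) ≠ 0 := by
          intro h
          have : ((j:ℂ)+1) = 0 := by linear_combination -h
          exact Nat.cast_add_one_ne_zero j this
        have heq : gen N 0 j A = (-((j:ℂ)+1))⁻¹ •
            ((gen N 1 (j+1) 1 * gen N (-1) 0 A - gen N (-1) 0 A * gen N 1 (j+1) 1)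
              - ∑ s ∈ Finset.range j,
                (((-1 : ℂ)^(j+1-s) * ((j+1).choose s : ℂ)) • gen N 0 s A)) := by
          have h0 : (-1 : ℂ) + -(j:ℂ) ≠ 0 := fun h => hne (by linear_combination h)
          rw [bracket2, Finset.sum_range_succ, hcj]
          match_scalars <;> field_simp <;> ring
        have hmem : (gen N 1 (j+1) 1 * gen N (-1) 0 A - gen N (-1) 0 A * gen N 1 (j+1) 1)
              - ∑ s ∈ Finset.range j,
                (((-1 : ℂ)^(j+1-s) * ((j+1).choose s : ℂ)) • gen N 0 s A)
            ∈ Submodule.span ℂ S := by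
          have hsum : ∑ s ∈ Finset.range j,
              (((-1 : ℂ)^(j+1-s) * ((j+1).choose s : ℂ)) • gen N 0 s A)
              ∈ Submodule.span ℂ S := by
            refine Submodule.sum_mem (Submodule.span ℂ S) (fun s hs => ?_)
            exact Submodule.smul_mem _ _ (ih s (Finset.mem_range.mp hs))
          exact Submodule.sub_mem (Submodule.span ℂ S) hz hsum
        rw [heq]
        exact Submodule.smul_mem _ _ hmem
    · have hx : gen N i j A ∈ Submodule.span ℂ T := Submodule.subset_span ⟨i, j, A, rfl⟩
      have hz : gen N 0 1 1 * gen N i j A - gen N i j A * gen N 0 1 1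
          ∈ Submodule.span ℂ S := Submodule.subset_span ⟨0, 1, _, hx, rfl⟩
      have hne : (i : ℂ) ≠ 0 := Int.cast_ne_zero.mpr hi
      have heq : gen N i j A = (i:ℂ)⁻¹ •
          (gen N 0 1 1 * gen N i j A - gen N i j A * gen N 0 1 1) := by
        rw [bracket1, smul_smul, inv_mul_cancel₀ hne, one_smul]
      rw [heq]
      exact Submodule.smul_mem _ _ hz
  · intro V _ _ M hρ hC
    have key : ∀ (b : ℤ) (m : ℕ) (B : Matrix (Fin N) (Fin N) ℂ), M.ρ b m B = 0 := by
      intro b m B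
      have h := M.bracket_rel 1 0 1 b (m+1) B
      rw [hρ 1 0, hC] at h
      have hsub : Finset.range 2 ⊆ Finset.range (m + 1 + 1) :=
        Finset.range_subset_range.mpr (by omega)
      have hzero : ∀ s ∈ Finset.range (m + 1 + 1), s ∉ Finset.range 2 →
          ((((m+1).choose s : ℂ) * (dfall 1 s : ℂ)) •
            M.ρ (1 + b - (s : ℤ)) (0 + (m+1) - s) (B * 1)) = 0 := by
        intro s _ hs2
        have hs : 2 ≤ s := by
          by_contra hlt
          exact hs2 (Finset.mem_range.mpr (by omega))
        have : dfall 1 s = 0 := by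
          refine Finset.prod_eq_zero (Finset.mem_range.mpr (by omega : 1 < s)) ?_
          norm_num
        rw [this]
        simp
      rw [← Finset.sum_subset hsub (fun s hs hs2 => hzero s hs hs2)] at h
      rw [Finset.sum_range_one, Finset.sum_range_succ, Finset.sum_range_one] at h
      have e1 : (1 : ℤ) + b - (0 : ℕ) = 1 + b := by push_cast; ring
      have e2 : (1 : ℤ) + b - (1 : ℕ) = b := by push_cast; ring
      have e3 : 0 + (m+1) - 0 = m + 1 := by omega
      have e4 : 0 + (m+1) - 1 = m := by omega
      have d0 : dfall 1 0 = 1 := by simp [dfall]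
      have d1 : dfall 1 1 = 1 := by simp [dfall]
      have d2 : dfall b 0 = 1 := by simp [dfall]
      rw [e1, e2, e3, e4, d0, d1, d2] at h
      simp only [Nat.choose_zero_right, Nat.choose_self, Nat.choose_one_right,
        Nat.cast_one, Nat.cast_add, Int.cast_one, one_mul, mul_one, one_smul,
        Matrix.one_mul, Matrix.mul_one, mul_zero, smul_zero, zero_mul, zero_sub,
        add_zero] at h
      have h2 : ((m : ℂ) + 1) • M.ρ b m B = 0 := by
        have := h
        linear_combination (norm := module) this
      have hm : ((m : ℂ) + 1) ≠ 0 := Nat.cast_add_one_ne_zero m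
      calc M.ρ b m B = ((m:ℂ)+1)⁻¹ • (((m:ℂ)+1) • M.ρ b m B) := by
            rw [smul_smul, inv_mul_cancel₀ hm, one_smul]
        _ = 0 := by rw [h2, smul_zero]
    constructor
    · intro a j A v
      rw [key a j A]
      rfl
    · intro v
      rw [hC]
      rfl
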